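/- Under the discretization of Theorem on accelerated gradient descent (one step as above with s ≤ 1/√L), if the iteration starts at (x₀, 0), then for all n, f(x_n) − f(x*) ≤ 2 (1 + s√α)^{-n} (f(x₀) − f(x*)). -/

import Mathlib

open Real InnerProductSpace

section Aux

variable {F : Type*} [NormedAddCommGroup F] [InnerProductSpace ℝ F] [CompleteSpace F]

lemma agd_dir_deriv {f : F → ℝ} (hdiff : Differentiable ℝ f) (x u : F) (t : ℝ) :
    HasDerivAt (fun t : ℝ => f (x + t • u)) ⟪gradient f (x + t • u), u⟫_ℝ t := by
  have h1 : HasDerivAt (fun t : ℝ => x + t • u) u t := by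
    simpa using ((hasDerivAt_id t).smul_const u).const_add x
  have h2 := ((hdiff (x + t • u)).hasGradientAt.hasFDerivAt).comp_hasDerivAt t h1
  exact h2

lemma agd_descent {f : F → ℝ} {L : ℝ} (hdiff : Differentiable ℝ f)
    (hsmooth : ∀ x y : F, ‖gradient f x - gradient f y‖ ≤ L * ‖x - y‖) (x y : F) :
    f y ≤ f x + ⟪gradient f x, y - x⟫_ℝ + L / 2 * ‖y - x‖ ^ 2 := by
  set u := y - x with hu
  set ψ : ℝ → ℝ := fun t => f (x + t • u) - t * ⟪gradient f x, u⟫_ℝ - L / 2 * ‖u‖ ^ 2 * t ^ 2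
    with hψdef
  have hψ : ∀ t : ℝ, HasDerivAt ψ
      (⟪gradient f (x + t • u), u⟫_ℝ - ⟪gradient f x, u⟫_ℝ - L / 2 * ‖u‖ ^ 2 * (2 * t)) t := by
    intro t
    exact ((agd_dir_deriv hdiff x u t).sub (hasDerivAt_mul_const _)).sub
      (((hasDerivAt_pow 2 t).const_mul (L / 2 * ‖u‖ ^ 2)).congr_deriv (by push_cast; ring))
  have hanti : AntitoneOn ψ (Set.Icc (0 : ℝ) 1) := by
    apply antitoneOn_of_deriv_nonpos (convex_Icc 0 1)
    · exact fun t _ => ((hψ t).continuousAt).continuousWithinAt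
    · exact fun t _ => ((hψ t).differentiableAt).differentiableWithinAt
    · intro t ht
      rw [interior_Icc] at ht
      rw [(hψ t).deriv]
      have h1 : ⟪gradient f (x + t • u) - gradient f x, u⟫_ℝ
          ≤ ‖gradient f (x + t • u) - gradient f x‖ * ‖u‖ := real_inner_le_norm _ _
      have h2 : ‖gradient f (x + t • u) - gradient f x‖ ≤ L * (t * ‖u‖) := by
        have := hsmooth (x + t • u) x
        simpa [norm_smul, abs_of_pos ht.1] using this
      have h3 : ⟪gradient f (x + t • u) - gradient f x, u⟫_ℝ
          = ⟪gradient f (x + t • u), u⟫_ℝ - ⟪gradient f x, u⟫_ℝ := inner_sub_left _ _ _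
      nlinarith [norm_nonneg u, mul_le_mul_of_nonneg_right h2 (norm_nonneg u)]
  have h01 := hanti (Set.mem_Icc.2 ⟨le_refl 0, zero_le_one⟩) (Set.mem_Icc.2 ⟨zero_le_one, le_refl 1⟩)
    zero_le_one
  have e0 : ψ 0 = f x := by simp [hψdef]
  have e1 : ψ 1 = f y - ⟪gradient f x, u⟫_ℝ - L / 2 * ‖u‖ ^ 2 := by
    simp [hψdef, hu]
  rw [e0, e1] at h01
  linarith

lemma agd_key_ineq (v z g : F) {s σ L : ℝ} (hs : 0 < s) (hσ : 0 < σ) (hL : 0 < L)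
    (hsL : s ^ 2 * L ≤ 1) :
    (1 + s * σ) * (‖(1 + s * σ)⁻¹ • (v - s • g) + σ • z‖ ^ 2 / 2 - ‖g‖ ^ 2 / (2 * L))
      ≤ ‖v + σ • z‖ ^ 2 / 2 - s * ⟪g, v⟫_ℝ + σ ^ 2 * s ^ 2 / 2 * ‖v‖ ^ 2
        - s * σ * ⟪g, z⟫_ℝ + s * σ * σ ^ 2 / 2 * ‖z‖ ^ 2 := by
  have hpos : (0 : ℝ) < 1 + s * σ := by positivity
  have hne : (1 : ℝ) + s * σ ≠ 0 := ne_of_gt hpos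
  have hs2 : s ^ 2 ≤ 1 / L := by
    rw [le_div_iff₀ hL]; exact hsL
  have core : 0 ≤ s * σ * (1 + s * σ + s ^ 2 * σ ^ 2) * ‖v‖ ^ 2 - 2 * s ^ 2 * σ * ⟪g, v⟫_ℝ
      + ((1 + s * σ) ^ 2 / L - s ^ 2) * ‖g‖ ^ 2 := by
    have hb : ⟪g, v⟫_ℝ ≤ ‖g‖ * ‖v‖ := real_inner_le_norm g v
    have h2 : s ^ 2 * (2 * s * σ + s ^ 2 * σ ^ 2) ≤ (1 + s * σ) ^ 2 / L - s ^ 2 := by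
      have h3 : (1 + s * σ) ^ 2 * s ^ 2 ≤ (1 + s * σ) ^ 2 * (1 / L) :=
        mul_le_mul_of_nonneg_left hs2 (by positivity)
      have h4 : (1 + s * σ) ^ 2 * (1 / L) = (1 + s * σ) ^ 2 / L := by ring
      nlinarith [sq_nonneg (s * σ)]
    have hb2 : 2 * s ^ 2 * σ * ⟪g, v⟫_ℝ ≤ 2 * s ^ 2 * σ * (‖g‖ * ‖v‖) :=
      mul_le_mul_of_nonneg_left hb (by positivity)
    nlinarith [sq_nonneg (‖v‖ - s * ‖g‖), norm_nonneg v, norm_nonneg g,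
      mul_nonneg (mul_nonneg hs.le hσ.le) (sq_nonneg (‖v‖ - s * ‖g‖)),
      mul_nonneg (mul_nonneg (mul_nonneg hs.le hσ.le) (mul_nonneg hs.le hσ.le)) (sq_nonneg ‖v‖),
      mul_nonneg (mul_nonneg (mul_nonneg (mul_nonneg hs.le hs.le) hs.le) hσ.le) (sq_nonneg ‖g‖),
      mul_le_mul_of_nonneg_right h2 (sq_nonneg ‖g‖)]
  have eq1 : (‖v + σ • z‖ ^ 2 / 2 - s * ⟪g, v⟫_ℝ + σ ^ 2 * s ^ 2 / 2 * ‖v‖ ^ 2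
        - s * σ * ⟪g, z⟫_ℝ + s * σ * σ ^ 2 / 2 * ‖z‖ ^ 2)
      - (1 + s * σ) * (‖(1 + s * σ)⁻¹ • (v - s • g) + σ • z‖ ^ 2 / 2 - ‖g‖ ^ 2 / (2 * L))
      = (s * σ * (1 + s * σ + s ^ 2 * σ ^ 2) * ‖v‖ ^ 2 - 2 * s ^ 2 * σ * ⟪g, v⟫_ℝ
        + ((1 + s * σ) ^ 2 / L - s ^ 2) * ‖g‖ ^ 2) / (2 * (1 + s * σ)) := by
    simp only [norm_add_sq_real, norm_sub_sq_real, norm_smul, real_inner_smul_left,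
      real_inner_smul_right, inner_sub_left, inner_sub_right, Real.norm_eq_abs, sq_abs, mul_pow,
      abs_of_pos hpos, abs_of_pos hσ, abs_of_pos (inv_pos.2 hpos)]
    rw [real_inner_comm v g]
    field_simp
    ring
  have : 0 ≤ (s * σ * (1 + s * σ + s ^ 2 * σ ^ 2) * ‖v‖ ^ 2 - 2 * s ^ 2 * σ * ⟪g, v⟫_ℝ
      + ((1 + s * σ) ^ 2 / L - s ^ 2) * ‖g‖ ^ 2) / (2 * (1 + s * σ)) :=
    div_nonneg core (by positivity)
  linarith [eq1 ▸ this]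

end Aux

set_option maxHeartbeats 1000000

theorem accelerated_gradient_descent_convergence
    {d : ℕ} {f : EuclideanSpace ℝ (Fin d) → ℝ} {α L s : ℝ}
    (hα : 0 < α) (hαL : α ≤ L) (hdiff : Differentiable ℝ f)
    (hsc : ∀ x y : EuclideanSpace ℝ (Fin d),
      f x ≥ f y + ⟪gradient f y, x - y⟫_ℝ + (α / 2) * ‖x - y‖ ^ 2)
    (hsmooth : ∀ x y : EuclideanSpace ℝ (Fin d),
      ‖gradient f x - gradient f y‖ ≤ L * ‖x - y‖)
    (xstar : EuclideanSpace ℝ (Fin d)) (hmin : ∀ y, f xstar ≤ f y)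
    (hs : 0 < s) (hsL : s ≤ 1 / Real.sqrt L)
    (x v x' : ℕ → EuclideanSpace ℝ (Fin d))
    (hx' : ∀ n, x' n = x n + s • v n)
    (hxrec : ∀ n, x (n + 1) = x' n - (1 / L) • gradient f (x' n))
    (hvrec : ∀ n, v (n + 1) =
      (1 + s * Real.sqrt α)⁻¹ • (v n - (1 + s * Real.sqrt α)⁻¹ •
        ((s * Real.sqrt α) • v n + s • gradient f (x' n)))
      + ((1 + s * Real.sqrt α)⁻¹ * (Real.sqrt α / L)) • gradient f (x' n))
    (hv0 : v 0 = 0) :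
    ∀ n : ℕ, f (x n) - f xstar ≤
      2 * ((1 + s * Real.sqrt α)⁻¹) ^ n * (f (x 0) - f xstar) := by
  set σ : ℝ := Real.sqrt α with hσdef
  have hσ : 0 < σ := Real.sqrt_pos.2 hα
  have hσ2 : σ ^ 2 = α := Real.sq_sqrt hα.le
  have hL : 0 < L := lt_of_lt_of_le hα hαL
  have hpos : (0 : ℝ) < 1 + s * σ := by positivity
  have hne : (1 : ℝ) + s * σ ≠ 0 := ne_of_gt hpos
  have hLne : L ≠ 0 := ne_of_gt hL
  have hs2L : s ^ 2 * L ≤ 1 := by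
    have h1 : s ≤ 1 / Real.sqrt L := hsL
    have hsqL : 0 < Real.sqrt L := Real.sqrt_pos.2 hL
    have h2 : s ^ 2 ≤ (1 / Real.sqrt L) ^ 2 := by
      apply pow_le_pow_left₀ hs.le h1
    have h3 : (1 / Real.sqrt L) ^ 2 = 1 / L := by
      rw [div_pow, one_pow, Real.sq_sqrt hL.le]
    rw [h3] at h2
    calc s ^ 2 * L ≤ (1 / L) * L := mul_le_mul_of_nonneg_right h2 hL.le
      _ = 1 := by field_simp
  -- gradient vanishes at the minimizer
  have hgrad0 : gradient f xstar = 0 := by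
    have hloc : IsLocalMin f xstar := Filter.Eventually.of_forall hmin
    have hfd : fderiv ℝ f xstar = 0 := hloc.fderiv_eq_zero
    rw [gradient, hfd]
    simp
  -- Lyapunov function
  set E : ℕ → ℝ := fun n => f (x n) - f xstar + ‖v n + σ • (x' n - xstar)‖ ^ 2 / 2 with hEdef
  -- one-step decay
  have hstep : ∀ n, E (n + 1) ≤ (1 + s * σ)⁻¹ * E n := by
    intro n
    set g : EuclideanSpace ℝ (Fin d) := gradient f (x' n) with hgdef
    set z : EuclideanSpace ℝ (Fin d) := x' n - xstar with hzdef
    -- new Lyapunov vector identity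
    have hw : v (n + 1) + σ • (x' (n + 1) - xstar)
        = (1 + s * σ)⁻¹ • (v n - s • g) + σ • z := by
      rw [hgdef, hzdef, hx' (n + 1), hxrec n, hvrec n]
      match_scalars
      all_goals field_simp
      all_goals try ring
      all_goals exact Or.inl (by ring)
    -- descent step
    have hdesc : f (x (n + 1)) ≤ f (x' n) - ‖g‖ ^ 2 / (2 * L) := by
      have h1 := agd_descent hdiff hsmooth (x' n) (x (n + 1))
      rw [← hgdef] at h1
      have h2 : x (n + 1) - x' n = -((1 / L) • g) := by
        rw [hxrec n]; abel
      rw [h2] at h1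
      have h3 : ⟪g, -((1 / L) • g)⟫_ℝ = -(1 / L) * ‖g‖ ^ 2 := by
        rw [inner_neg_right, real_inner_smul_right, real_inner_self_eq_norm_sq]; ring
      have h4 : ‖-((1 / L) • g)‖ ^ 2 = (1 / L) ^ 2 * ‖g‖ ^ 2 := by
        rw [norm_neg, norm_smul, mul_pow, Real.norm_eq_abs, sq_abs]
      rw [h3, h4] at h1
      have : L / 2 * ((1 / L) ^ 2 * ‖g‖ ^ 2) = ‖g‖ ^ 2 / (2 * L) := by
        field_simp
      rw [this] at h1
      have h5 : -(1 / L) * ‖g‖ ^ 2 = -(‖g‖ ^ 2 / L) := by ring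
      rw [h5] at h1
      have h6 : ‖g‖ ^ 2 / (2 * L) = ‖g‖ ^ 2 / L - ‖g‖ ^ 2 / (2 * L) := by ring
      linarith
    -- strong convexity at x n
    have hC : f (x' n) - f (x n) ≤ s * ⟪g, v n⟫_ℝ - α * s ^ 2 / 2 * ‖v n‖ ^ 2 := by
      have h1 := hsc (x n) (x' n)
      rw [← hgdef] at h1
      have h2 : x n - x' n = -(s • v n) := by rw [hx' n]; abel
      rw [h2] at h1
      have h3 : ⟪g, -(s • v n)⟫_ℝ = -(s * ⟪g, v n⟫_ℝ) := by
        rw [inner_neg_right, real_inner_smul_right]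
      have h4 : ‖-(s • v n)‖ ^ 2 = s ^ 2 * ‖v n‖ ^ 2 := by
        rw [norm_neg, norm_smul, mul_pow, Real.norm_eq_abs, sq_abs]
      rw [h3, h4] at h1
      linarith [h1]
    -- strong convexity at xstar
    have hB : f (x' n) - f xstar ≤ ⟪g, z⟫_ℝ - α / 2 * ‖z‖ ^ 2 := by
      have h1 := hsc xstar (x' n)
      rw [← hgdef] at h1
      have h2 : xstar - x' n = -z := by rw [hzdef]; abel
      rw [h2] at h1
      have h3 : ⟪g, -z⟫_ℝ = -⟪g, z⟫_ℝ := inner_neg_right _ _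
      have h4 : ‖-z‖ ^ 2 = ‖z‖ ^ 2 := by rw [norm_neg]
      rw [h3, h4] at h1
      linarith [h1]
    -- key vector inequality
    have hkey := agd_key_ineq (v n) z g hs hσ hL hs2L
    -- combine
    have hgoal : (1 + s * σ) * E (n + 1) ≤ E n := by
      have hE1 : E (n + 1) = f (x (n + 1)) - f xstar
          + ‖(1 + s * σ)⁻¹ • (v n - s • g) + σ • z‖ ^ 2 / 2 := by
        simp only [hEdef]; rw [hw]
      have hE0 : E n = f (x n) - f xstar + ‖v n + σ • z‖ ^ 2 / 2 := by
        simp only [hEdef, hzdef]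
      rw [hE1, hE0]
      have hcomb : (1 + s * σ) * (f (x (n + 1)) - f xstar)
          ≤ (1 + s * σ) * (f (x' n) - f xstar) - (1 + s * σ) * (‖g‖ ^ 2 / (2 * L)) := by
        have := mul_le_mul_of_nonneg_left hdesc hpos.le
        nlinarith [this]
      have hfsum : (1 + s * σ) * (f (x' n) - f xstar)
          ≤ (f (x n) - f xstar) + (s * ⟪g, v n⟫_ℝ - α * s ^ 2 / 2 * ‖v n‖ ^ 2)
            + s * σ * (⟪g, z⟫_ℝ - α / 2 * ‖z‖ ^ 2) := by
        have hb := mul_le_mul_of_nonneg_left hB (by positivity : (0:ℝ) ≤ s * σ)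
        nlinarith [hC, hb]
      rw [hσ2] at hkey
      linarith [hkey, hcomb, hfsum]
    have := mul_le_mul_of_nonneg_left hgoal (le_of_lt (inv_pos.2 hpos))
    calc E (n + 1) = (1 + s * σ)⁻¹ * ((1 + s * σ) * E (n + 1)) := by
          rw [← mul_assoc, inv_mul_cancel₀ hne, one_mul]
      _ ≤ (1 + s * σ)⁻¹ * E n := this
  -- iterate
  have hEn : ∀ n, E n ≤ ((1 + s * σ)⁻¹) ^ n * E 0 := by
    intro n
    induction n with
    | zero => simp
    | succ n ih =>
      calc E (n + 1) ≤ (1 + s * σ)⁻¹ * E n := hstep n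
        _ ≤ (1 + s * σ)⁻¹ * (((1 + s * σ)⁻¹) ^ n * E 0) :=
            mul_le_mul_of_nonneg_left ih (le_of_lt (inv_pos.2 hpos))
        _ = ((1 + s * σ)⁻¹) ^ (n + 1) * E 0 := by ring
  -- initial energy bound
  have hE0 : E 0 ≤ 2 * (f (x 0) - f xstar) := by
    have hx'0 : x' 0 = x 0 := by rw [hx' 0, hv0]; simp
    have h1 : E 0 = f (x 0) - f xstar + ‖σ • (x 0 - xstar)‖ ^ 2 / 2 := by
      simp only [hEdef]; rw [hx'0, hv0, zero_add]
    have h2 : ‖σ • (x 0 - xstar)‖ ^ 2 = α * ‖x 0 - xstar‖ ^ 2 := by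
      rw [norm_smul, mul_pow, Real.norm_eq_abs, sq_abs, hσ2]
    have h3 := hsc (x 0) xstar
    rw [hgrad0] at h3
    simp only [inner_zero_left, add_zero] at h3
    rw [h1, h2]
    nlinarith [h3]
  intro n
  have h1 : f (x n) - f xstar ≤ E n := by
    simp only [hEdef]
    nlinarith [sq_nonneg ‖v n + σ • (x' n - xstar)‖]
  have h2 : ((1 + s * σ)⁻¹) ^ n * E 0 ≤ ((1 + s * σ)⁻¹) ^ n * (2 * (f (x 0) - f xstar)) :=
    mul_le_mul_of_nonneg_left hE0 (by positivity)
  calc f (x n) - f xstar ≤ E n := h1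
    _ ≤ ((1 + s * σ)⁻¹) ^ n * E 0 := hEn n
    _ ≤ ((1 + s * σ)⁻¹) ^ n * (2 * (f (x 0) - f xstar)) := h2
    _ = 2 * ((1 + s * Real.sqrt α)⁻¹) ^ n * (f (x 0) - f xstar) := by rw [hσdef]; ring
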